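/- arXiv:2604.01469 — 6 statements merged into one kernel-verified Lean document; each statement's English description precedes it below -/
import Mathlib

section
/- Let m ≥ 1 and n_c ≥ 5 be integers and let θ ∈ ℝ^{m(n_c−1)+1} satisfy conditions (C1)–(C2) with some integer vector k = (k_0, ..., k_{m−1}). Then for every vertex i of the 1D honeycomb graph G(m, n_c), the coupling sum vanishes: Σ_{j : (i,j) an edge of G(m,n_c)} sin(θ_j − θ_i) = 0. Consequently, for any common natural frequency ω and any uniform coupling weight a > 0, every oscillator in the Kuramoto dynamics θ̇_i = ω + a Σ_{(i,j) edge} sin(θ_j − θ_i) has velocity ω at θ, i.e. θ is a phase-locked configuration. -/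
/-- Edge relation of the 1D honeycomb graph `G(m, n_c)` on vertices `{1, ..., m(n_c-1)+1}`:
path edges `(i, i+1)` for `1 ≤ i ≤ m(n_c-1)` and chord edges
`(p(n_c-1)+1, (p+1)(n_c-1)+1)` for `p = 0, ..., m-1`, symmetrized. -/
def honEdge (m nc i j : ℕ) : Prop :=
  (1 ≤ i ∧ i ≤ m * (nc - 1) ∧ j = i + 1) ∨
  (1 ≤ j ∧ j ≤ m * (nc - 1) ∧ i = j + 1) ∨
  (∃ p, p < m ∧ ((i = p * (nc - 1) + 1 ∧ j = (p + 1) * (nc - 1) + 1) ∨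
                 (j = p * (nc - 1) + 1 ∧ i = (p + 1) * (nc - 1) + 1)))

open Classical in
/-- The Kuramoto coupling sum `Σ_{j : (i,j) edge} sin(θ_j - θ_i)` at vertex `i`. -/
noncomputable def couplingSum (m nc : ℕ) (θ : ℕ → ℝ) (i : ℕ) : ℝ :=
  ∑ j ∈ Finset.range (m * (nc - 1) + 2),
    if honEdge m nc i j then Real.sin (θ j - θ i) else 0

/-- Conditions (C1)–(C2): `|k_p| ≤ ⌈n_c/4⌉ - 1` for each `p < m`, and every consecutive
phase difference in the `p`-th cycle equals `2π k_p / n_c`. -/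
def satisfiesC (m nc : ℕ) (θ : ℕ → ℝ) (k : ℕ → ℤ) : Prop :=
  (∀ p, p < m → |k p| ≤ ⌈(nc : ℚ) / 4⌉ - 1) ∧
  (∀ p, p < m → ∀ i, p * (nc - 1) + 1 ≤ i → i ≤ (p + 1) * (nc - 1) →
    θ (i + 1) - θ i = 2 * Real.pi * (k p : ℝ) / (nc : ℝ))

open Classical in
/-- Guarded indicator sum. -/
lemma hon_sum_guard (N x : ℕ) (P : Prop) [Decidable P] (hx : P → x < N) (s : ℕ → ℝ) :
    (∑ j ∈ Finset.range N, if P ∧ j = x then s j else 0) = if P then s x else 0 := by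
  by_cases hP : P
  · simp only [hP, true_and, if_true]
    rw [Finset.sum_ite_eq' (Finset.range N) x s]
    simp [hx hP]
  · simp [hP]

/-- if `θ` satisfies (C1)–(C2) then the coupling sum vanishes at every vertex
of the honeycomb graph; consequently for any natural frequency `ω` and coupling `a > 0`,
every oscillator has velocity `ω` at `θ`, i.e. `θ` is a phase-locked configuration. -/
theorem honeycomb_phase_locked (m nc : ℕ) (hm : 1 ≤ m) (hnc : 5 ≤ nc)
    (θ : ℕ → ℝ) (k : ℕ → ℤ) (hC : satisfiesC m nc θ k) :
    (∀ i, 1 ≤ i → i ≤ m * (nc - 1) + 1 → couplingSum m nc θ i = 0) ∧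
    (∀ ω a : ℝ, 0 < a → ∀ i, 1 ≤ i → i ≤ m * (nc - 1) + 1 →
      ω + a * couplingSum m nc θ i = ω) := by
  classical
  have hc4 : 4 ≤ nc - 1 := by omega
  have hc0 : 0 < nc - 1 := by omega
  -- telescoping along a cycle
  have tel : ∀ p, p < m → ∀ t, t ≤ nc - 1 →
      θ (p*(nc-1)+1+t) = θ (p*(nc-1)+1) + (t:ℝ) * (2*Real.pi*(k p : ℝ)/(nc:ℝ)) := by
    intro p hp t
    induction t with
    | zero => intro _; simp
    | succ t ih =>
      intro ht
      have hpc : (p+1)*(nc-1) = p*(nc-1)+(nc-1) := by ring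
      have h1 := hC.2 p hp (p*(nc-1)+1+t) (by omega) (by omega)
      have h2 := ih (by omega)
      have h3 : (p*(nc-1)+1+t)+1 = p*(nc-1)+1+(t+1) := by omega
      rw [h3] at h1
      push_cast
      linarith
  -- sine at the chord
  have sinc : ∀ p : ℕ,
      Real.sin (((nc-1:ℕ):ℝ) * (2*Real.pi*(k p : ℝ)/(nc:ℝ)))
        = - Real.sin (2*Real.pi*(k p : ℝ)/(nc:ℝ)) := by
    intro p
    have hncR : (nc:ℝ) ≠ 0 := Nat.cast_ne_zero.mpr (by omega)
    have h1 : ((nc-1:ℕ):ℝ) = (nc:ℝ) - 1 := by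
      rw [Nat.cast_sub (by omega : 1 ≤ nc)]; simp
    have h2 : ((nc:ℝ) - 1) * (2*Real.pi*(k p : ℝ)/(nc:ℝ))
        = -(2*Real.pi*(k p : ℝ)/(nc:ℝ)) + (k p : ℝ) * (2*Real.pi) := by
      field_simp; ring
    rw [h1, h2, Real.sin_add_int_mul_two_pi, Real.sin_neg]
  have main : ∀ i, 1 ≤ i → i ≤ m * (nc - 1) + 1 → couplingSum m nc θ i = 0 := by
    intro i hi1 hi2
    obtain ⟨q, r, hr, hi⟩ : ∃ q r, r < nc - 1 ∧ i = q*(nc-1)+r+1 := by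
      refine ⟨(i-1)/(nc-1), (i-1)%(nc-1), Nat.mod_lt _ hc0, ?_⟩
      have := Nat.div_add_mod' (i-1) (nc-1)
      omega
    have hq1c : (q+1)*(nc-1) = q*(nc-1)+(nc-1) := by ring
    have hm1c : (m+1)*(nc-1) = m*(nc-1)+(nc-1) := by ring
    by_cases hr0 : 1 ≤ r
    · -- interior vertex
      have hqm : q < m := by
        by_contra h
        have : m * (nc-1) ≤ q * (nc-1) := Nat.mul_le_mul_right _ (by omega)
        omega
      have hqm' : (q+1)*(nc-1) ≤ m * (nc-1) := Nat.mul_le_mul_right _ (by omega)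
      have hEdge : ∀ j, honEdge m nc i j ↔ (j = i + 1 ∨ j = i - 1) := by
        intro j
        constructor
        · rintro (⟨_, _, hj⟩ | ⟨hj1, _, hj⟩ | ⟨p, hp, (⟨hip, hjp⟩ | ⟨hjp, hip⟩)⟩)
          · exact Or.inl hj
          · exact Or.inr (by omega)
          · exfalso
            have h1 : (p * (nc-1)) % (nc-1) = 0 := Nat.mul_mod_left p (nc-1)
            have h2 : (q * (nc-1) + r) % (nc-1) = r := by
              rw [Nat.add_comm, Nat.add_mul_mod_self_right, Nat.mod_eq_of_lt hr]
            have h3 : p * (nc-1) = q * (nc-1) + r := by omega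
            rw [h3] at h1; omega
          · exfalso
            have h1 : ((p+1) * (nc-1)) % (nc-1) = 0 := Nat.mul_mod_left (p+1) (nc-1)
            have h2 : (q * (nc-1) + r) % (nc-1) = r := by
              rw [Nat.add_comm, Nat.add_mul_mod_self_right, Nat.mod_eq_of_lt hr]
            have h3 : (p+1) * (nc-1) = q * (nc-1) + r := by omega
            rw [h3] at h1; omega
        · rintro (hj | hj)
          · exact Or.inl ⟨by omega, by omega, hj⟩
          · exact Or.inr (Or.inl ⟨by omega, by omega, by omega⟩)
      have key : couplingSum m nc θ i
          = ∑ j ∈ Finset.range (m * (nc - 1) + 2),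
              ((if j = i + 1 then Real.sin (θ j - θ i) else 0)
               + (if j = i - 1 then Real.sin (θ j - θ i) else 0)) := by
        unfold couplingSum
        refine Finset.sum_congr rfl fun j _ => ?_
        by_cases h1 : j = i + 1
        · rw [if_pos ((hEdge j).2 (Or.inl h1)), if_pos h1, if_neg (by omega)]; ring
        · by_cases h2 : j = i - 1
          · rw [if_pos ((hEdge j).2 (Or.inr h2)), if_neg h1, if_pos h2]; ring
          · rw [if_neg (fun h => by rcases (hEdge j).1 h with h | h; exact h1 h; exact h2 h),
              if_neg h1, if_neg h2]; ring
      rw [key, Finset.sum_add_distrib, Finset.sum_ite_eq' _ (i+1), Finset.sum_ite_eq' _ (i-1)]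
      rw [if_pos (by simp only [Finset.mem_range]; omega),
          if_pos (by simp only [Finset.mem_range]; omega)]
      have e1 : θ (i+1) - θ i = 2*Real.pi*(k q : ℝ)/(nc:ℝ) :=
        hC.2 q hqm i (by omega) (by omega)
      have e2 : θ ((i-1)+1) - θ (i-1) = 2*Real.pi*(k q : ℝ)/(nc:ℝ) :=
        hC.2 q hqm (i-1) (by omega) (by omega)
      rw [show (i-1)+1 = i by omega] at e2
      rw [e1, show θ (i-1) - θ i = -(2*Real.pi*(k q : ℝ)/(nc:ℝ)) by linarith, Real.sin_neg]
      ring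
    · -- junction vertex, r = 0
      have hr0' : r = 0 := by omega
      have hi' : i = q*(nc-1)+1 := by omega
      have hqm : q ≤ m := by
        by_contra h
        have : (m+1) * (nc-1) ≤ q * (nc-1) := Nat.mul_le_mul_right _ (by omega)
        omega
      have hqub : q < m → (q+1)*(nc-1) ≤ m*(nc-1) :=
        fun h => Nat.mul_le_mul_right _ (by omega)
      have hqlb : 1 ≤ q → nc - 1 ≤ q*(nc-1) :=
        fun h => Nat.le_mul_of_pos_left _ (by omega)
      have hqmul : q*(nc-1) ≤ m*(nc-1) := Nat.mul_le_mul_right _ hqm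
      have hqq : 1 ≤ q → (q-1)*(nc-1) + (nc-1) = q*(nc-1) := by
        intro h
        have h5 : (q-1+1) * (nc-1) = (q-1)*(nc-1)+(nc-1) := by ring
        rw [show q-1+1 = q by omega] at h5
        omega
      have hEdge : ∀ j, honEdge m nc i j ↔
          ((q < m ∧ j = i + 1) ∨ (1 ≤ q ∧ j = i - 1) ∨
           (q < m ∧ j = i + (nc-1)) ∨ (1 ≤ q ∧ j = i - (nc-1))) := by
        intro j
        constructor
        · rintro (⟨_, hile, hj⟩ | ⟨hj1, _, hj⟩ | ⟨p, hp, (⟨hip, hjp⟩ | ⟨hjp, hip⟩)⟩)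
          · refine Or.inl ⟨?_, hj⟩
            by_contra h
            have : m * (nc-1) ≤ q * (nc-1) := Nat.mul_le_mul_right _ (by omega)
            omega
          · refine Or.inr (Or.inl ⟨?_, by omega⟩)
            by_contra h
            have h0 : q = 0 := by omega
            subst h0
            omega
          · have hpq : p = q := by
              have : p * (nc-1) = q * (nc-1) := by omega
              exact Nat.eq_of_mul_eq_mul_right hc0 this
            subst hpq
            exact Or.inr (Or.inr (Or.inl ⟨hp, by omega⟩))
          · have hpc2 : (p+1)*(nc-1) = p*(nc-1)+(nc-1) := by ring
            have hpq : p + 1 = q := by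
              have : (p+1) * (nc-1) = q * (nc-1) := by omega
              exact Nat.eq_of_mul_eq_mul_right hc0 this
            exact Or.inr (Or.inr (Or.inr ⟨by omega, by omega⟩))
        · rintro (⟨hq, hj⟩ | ⟨hq, hj⟩ | ⟨hq, hj⟩ | ⟨hq, hj⟩)
          · exact Or.inl ⟨by omega, by have := hqub hq; omega, hj⟩
          · exact Or.inr (Or.inl ⟨by have := hqlb hq; omega, by omega, by omega⟩)
          · exact Or.inr (Or.inr ⟨q, hq, Or.inl ⟨hi', by omega⟩⟩)
          · refine Or.inr (Or.inr ⟨q - 1, by omega, Or.inr ⟨?_, ?_⟩⟩)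
            · have := hqq hq
              have := hqlb hq
              omega
            · rw [show q-1+1 = q by omega]
              exact hi'
      have key : couplingSum m nc θ i
          = ∑ j ∈ Finset.range (m * (nc - 1) + 2),
              ((if q < m ∧ j = i + 1 then Real.sin (θ j - θ i) else 0)
               + ((if 1 ≤ q ∧ j = i - 1 then Real.sin (θ j - θ i) else 0)
               + ((if q < m ∧ j = i + (nc-1) then Real.sin (θ j - θ i) else 0)
               + (if 1 ≤ q ∧ j = i - (nc-1) then Real.sin (θ j - θ i) else 0)))) := by
        unfold couplingSum
        refine Finset.sum_congr rfl fun j _ => ?_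
        have hib : 1 ≤ q → nc - 1 + 1 ≤ i := by
          intro h; have := hqlb h; omega
        by_cases h1 : q < m ∧ j = i + 1
        · rw [if_pos ((hEdge j).2 (Or.inl h1)), if_pos h1,
            if_neg (by rintro ⟨_, h⟩; omega), if_neg (by rintro ⟨_, h⟩; omega),
            if_neg (by rintro ⟨hg, h⟩; have := hib hg; omega)]
          ring
        · by_cases h2 : 1 ≤ q ∧ j = i - 1
          · rw [if_pos ((hEdge j).2 (Or.inr (Or.inl h2))), if_neg h1, if_pos h2,
              if_neg (by rintro ⟨_, h⟩; omega),
              if_neg (by rintro ⟨hg, h⟩; have := hib hg; omega)]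
            ring
          · by_cases h3 : q < m ∧ j = i + (nc-1)
            · rw [if_pos ((hEdge j).2 (Or.inr (Or.inr (Or.inl h3)))), if_neg h1, if_neg h2,
                if_pos h3, if_neg (by rintro ⟨hg, h⟩; have := hib hg; omega)]
              ring
            · by_cases h4 : 1 ≤ q ∧ j = i - (nc-1)
              · rw [if_pos ((hEdge j).2 (Or.inr (Or.inr (Or.inr h4)))), if_neg h1, if_neg h2,
                  if_neg h3, if_pos h4]
                ring
              · rw [if_neg (fun h => by
                    rcases (hEdge j).1 h with h | h | h | h
                    exacts [h1 h, h2 h, h3 h, h4 h]),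
                  if_neg h1, if_neg h2, if_neg h3, if_neg h4]
                ring
      rw [key, Finset.sum_add_distrib, Finset.sum_add_distrib, Finset.sum_add_distrib,
        hon_sum_guard _ _ _ (fun h => by have := hqub h; omega),
        hon_sum_guard _ _ _ (fun h => by omega),
        hon_sum_guard _ _ _ (fun h => by have := hqub h; omega),
        hon_sum_guard _ _ _ (fun h => by omega)]
      -- evaluate the four guarded terms
      have hA : q < m → Real.sin (θ (i+1) - θ i) + Real.sin (θ (i+(nc-1)) - θ i) = 0 := by
        intro hq
        have e1 : θ (i+1) - θ i = 2*Real.pi*(k q : ℝ)/(nc:ℝ) :=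
          hC.2 q hq i (by omega) (by omega)
        have e2 := tel q hq (nc-1) le_rfl
        rw [show q*(nc-1)+1+(nc-1) = i + (nc-1) by omega, ← hi'] at e2
        have e3 : θ (i+(nc-1)) - θ i = ((nc-1:ℕ):ℝ) * (2*Real.pi*(k q : ℝ)/(nc:ℝ)) := by
          rw [e2]; ring
        rw [e1, e3, sinc q]
        ring
      have hB : 1 ≤ q → Real.sin (θ (i-1) - θ i) + Real.sin (θ (i-(nc-1)) - θ i) = 0 := by
        intro hq
        have hp : q - 1 < m := by omega
        have hiq : i = (q-1)*(nc-1) + (nc-1) + 1 := by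
          have := hqq hq; omega
        have e1 : θ ((i-1)+1) - θ (i-1) = 2*Real.pi*(k (q-1) : ℝ)/(nc:ℝ) := by
          refine hC.2 (q-1) hp (i-1) (by omega) ?_
          have h5 : (q-1+1) * (nc-1) = (q-1)*(nc-1)+(nc-1) := by ring
          omega
        rw [show (i-1)+1 = i by omega] at e1
        have e2 := tel (q-1) hp (nc-1) le_rfl
        rw [show (q-1)*(nc-1)+1+(nc-1) = i by omega,
          show (q-1)*(nc-1)+1 = i - (nc-1) by omega] at e2
        have e3 : θ (i-(nc-1)) - θ i = -(((nc-1:ℕ):ℝ) * (2*Real.pi*(k (q-1) : ℝ)/(nc:ℝ))) := by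
          rw [e2]; ring
        rw [show θ (i-1) - θ i = -(2*Real.pi*(k (q-1) : ℝ)/(nc:ℝ)) by linarith,
          e3, Real.sin_neg, Real.sin_neg, sinc (q-1)]
        ring
      by_cases hql : q < m
      · by_cases hqg : 1 ≤ q
        · rw [if_pos hql, if_pos hqg, if_pos hql, if_pos hqg]
          have := hA hql; have := hB hqg; linarith
        · rw [if_pos hql, if_neg hqg, if_pos hql, if_neg hqg]
          have := hA hql; linarith
      · have hqg : 1 ≤ q := by omega
        rw [if_neg hql, if_pos hqg, if_neg hql, if_pos hqg]
        have := hB hqg; linarith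
  refine ⟨main, fun ω a _ i h1 h2 => by rw [main i h1 h2]; ring⟩
end

section
/- Let A = (a_{ij}) be a symmetric n×n real matrix with nonnegative entries and zero diagonal such that the graph on {1, ..., n} whose edges are the pairs with a_{ij} > 0 is connected, and let θ ∈ ℝ^n satisfy |θ_i − θ_j| < π/2 whenever a_{ij} > 0. Then the weighted Laplacian matrix L(θ) defined by L(θ)_{ij} = −a_{ij} cos(θ_i − θ_j) for i ≠ j and L(θ)_{ii} = Σ_{j ≠ i} a_{ij} cos(θ_i − θ_j) is positive semidefinite and its kernel is exactly the one-dimensional span of the all-ones vector. (This matrix is the negative of the Jacobian of the Kuramoto dynamics at θ, so an equilibrium with all edge phase differences strictly less than π/2 in absolute value is locally exponentially stable modulo the rotational direction.) -/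
/-!
`L(θ)` is the Laplacian of the graph with edge weights `w_{ij} = a_{ij} cos(θ_i - θ_j)`, and
`|θ_i - θ_j| < π/2` makes these weights positive exactly on the edges of `A`. For symmetric
nonnegative weights, `2 xᵀ L x = Σ_{i,j} w_{ij} (x_i - x_j)²`, so `L` is positive semidefinite
and, since `L x = 0 ↔ xᵀ L x = 0` for such matrices, `x` lies in the kernel iff it is constant
along every edge, i.e. constant on the connected graph.
-/

/-- The weighted Laplacian `L(θ)` of the Kuramoto dynamics at state `θ`:
`L(θ)_{ij} = -a_{ij} cos(θ_i - θ_j)` for `i ≠ j` and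
`L(θ)_{ii} = Σ_{l ≠ i} a_{il} cos(θ_i - θ_l)`. -/
noncomputable def kuramotoLaplacian (n : ℕ) (A : Matrix (Fin n) (Fin n) ℝ)
    (θ : Fin n → ℝ) : Matrix (Fin n) (Fin n) ℝ :=
  Matrix.of fun i j =>
    if i = j then ∑ l ∈ Finset.univ.erase i, A i l * Real.cos (θ i - θ l)
    else -(A i j * Real.cos (θ i - θ j))

open Finset Matrix

theorem SimpleGraph.Connected.exists_eq_const_of_forall_adj {V α : Type*} {G : SimpleGraph V}
    (hG : G.Connected) {x : V → α} (hx : ∀ i j, G.Adj i j → x i = x j) :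
    ∃ c, x = fun _ => c := by
  obtain ⟨i₀⟩ := hG.nonempty
  refine ⟨x i₀, funext fun j => ?_⟩
  obtain ⟨p⟩ := hG i₀ j
  induction p with
  | nil => rfl
  | cons hadj _ ih => exact ih.trans (hx _ _ hadj).symm

section WeightedLaplacian

variable {ι : Type*} [Fintype ι] [DecidableEq ι] {w : ι → ι → ℝ}

noncomputable def weightedLaplacian (w : ι → ι → ℝ) : Matrix ι ι ℝ :=
  of fun i j => if i = j then ∑ l ∈ univ.erase i, w i l else -w i j

theorem weightedLaplacian_mulVec_apply (w : ι → ι → ℝ) (x : ι → ℝ) (i : ι) :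
    (weightedLaplacian w *ᵥ x) i = ∑ j, w i j * (x i - x j) := by
  simp only [mulVec, dotProduct, weightedLaplacian, of_apply]
  rw [← sum_erase_add _ _ (mem_univ i), ← sum_erase_add _ _ (mem_univ i), if_pos rfl,
    sub_self, mul_zero, add_zero, sum_mul, ← sum_add_distrib]
  refine sum_congr rfl fun j hj => ?_
  rw [if_neg (ne_of_mem_erase hj).symm]
  ring

theorem weightedLaplacian_isHermitian (hsymm : ∀ i j, w j i = w i j) :
    (weightedLaplacian w).IsHermitian := by
  ext i j
  simp only [conjTranspose_apply, weightedLaplacian, of_apply, star_trivial]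
  rcases eq_or_ne i j with rfl | hij
  · rfl
  · rw [if_neg hij.symm, if_neg hij, hsymm]

theorem two_mul_dotProduct_weightedLaplacian_mulVec (hsymm : ∀ i j, w j i = w i j)
    (x : ι → ℝ) :
    2 * (x ⬝ᵥ weightedLaplacian w *ᵥ x) = ∑ i, ∑ j, w i j * (x i - x j) ^ 2 := by
  have hform : x ⬝ᵥ weightedLaplacian w *ᵥ x = ∑ i, ∑ j, w i j * (x i * (x i - x j)) := by
    simp only [dotProduct, weightedLaplacian_mulVec_apply, mul_sum]
    exact sum_congr rfl fun i _ => sum_congr rfl fun j _ => by ring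
  have hswap : ∑ i, ∑ j, w i j * (x i * (x i - x j))
      = ∑ i, ∑ j, w i j * (x j * (x j - x i)) := by
    rw [sum_comm]
    exact sum_congr rfl fun i _ => sum_congr rfl fun j _ => by rw [hsymm]
  calc 2 * (x ⬝ᵥ weightedLaplacian w *ᵥ x)
      = ∑ i, ∑ j, w i j * (x i * (x i - x j)) + ∑ i, ∑ j, w i j * (x j * (x j - x i)) := by
        rw [two_mul, hform, hswap]
    _ = ∑ i, ∑ j, w i j * (x i - x j) ^ 2 := by
        rw [← sum_add_distrib]
        refine sum_congr rfl fun i _ => ?_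
        rw [← sum_add_distrib]
        exact sum_congr rfl fun j _ => by ring

theorem posSemidef_weightedLaplacian (hsymm : ∀ i j, w j i = w i j)
    (hnonneg : ∀ i j, 0 ≤ w i j) : (weightedLaplacian w).PosSemidef := by
  refine .of_dotProduct_mulVec_nonneg (weightedLaplacian_isHermitian hsymm) fun x => ?_
  have h := two_mul_dotProduct_weightedLaplacian_mulVec hsymm x
  have : 0 ≤ ∑ i, ∑ j, w i j * (x i - x j) ^ 2 :=
    sum_nonneg fun i _ => sum_nonneg fun j _ => mul_nonneg (hnonneg i j) (sq_nonneg _)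
  rw [star_trivial]
  linarith

theorem weightedLaplacian_mulVec_eq_zero_iff (hsymm : ∀ i j, w j i = w i j)
    (hnonneg : ∀ i j, 0 ≤ w i j) {x : ι → ℝ} :
    weightedLaplacian w *ᵥ x = 0 ↔ ∀ i j, 0 < w i j → x i = x j := by
  have hterm : ∀ i j, 0 ≤ w i j * (x i - x j) ^ 2 := fun i j =>
    mul_nonneg (hnonneg i j) (sq_nonneg _)
  rw [← (posSemidef_weightedLaplacian hsymm hnonneg).dotProduct_mulVec_zero_iff, star_trivial,
    ← mul_eq_zero_iff_left two_ne_zero, two_mul_dotProduct_weightedLaplacian_mulVec hsymm,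
    Fintype.sum_eq_zero_iff_of_nonneg fun i => sum_nonneg fun j _ => hterm i j]
  simp only [funext_iff, Pi.zero_apply]
  refine forall_congr' fun i => ?_
  rw [Fintype.sum_eq_zero_iff_of_nonneg (hterm i)]
  simp only [funext_iff, Pi.zero_apply]
  refine forall_congr' fun j => ?_
  rw [mul_eq_zero, sq_eq_zero_iff, sub_eq_zero, (hnonneg i j).lt_iff_ne', ← or_iff_not_imp_left]

end WeightedLaplacian

theorem kuramotoLaplacian_eq_weightedLaplacian (n : ℕ) (A : Matrix (Fin n) (Fin n) ℝ)
    (θ : Fin n → ℝ) :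
    kuramotoLaplacian n A θ = weightedLaplacian fun i j => A i j * Real.cos (θ i - θ j) :=
  rfl

theorem kuramoto_laplacian_posSemidef_ker_span_one_general (n : ℕ)
    (A : Matrix (Fin n) (Fin n) ℝ) (hsymm : A.IsSymm)
    (hnonneg : ∀ i j, 0 ≤ A i j)
    (hconn : (SimpleGraph.fromRel (fun i j : Fin n => 0 < A i j)).Connected)
    (θ : Fin n → ℝ)
    (hcoh : ∀ i j, 0 < A i j → |θ i - θ j| < Real.pi / 2) :
    (kuramotoLaplacian n A θ).PosSemidef ∧
    (∀ x : Fin n → ℝ,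
      (kuramotoLaplacian n A θ).mulVec x = 0 ↔ ∃ c : ℝ, x = fun _ => c) := by
  set w : Fin n → Fin n → ℝ := fun i j => A i j * Real.cos (θ i - θ j)
  have hw_symm : ∀ i j, w j i = w i j := fun i j => by
    simp only [w, hsymm.apply i j, ← Real.cos_neg (θ j - θ i), neg_sub]
  have hw_pos : ∀ i j, 0 < A i j → 0 < w i j := fun i j h =>
    mul_pos h (Real.cos_pos_of_mem_Ioo (abs_lt.mp (hcoh i j h)))
  have hw_nonneg : ∀ i j, 0 ≤ w i j := fun i j =>
    (hnonneg i j).eq_or_lt.elim (fun h => by simp [w, ← h]) fun h => (hw_pos i j h).le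
  rw [kuramotoLaplacian_eq_weightedLaplacian]
  refine ⟨posSemidef_weightedLaplacian hw_symm hw_nonneg, fun x => ?_⟩
  rw [weightedLaplacian_mulVec_eq_zero_iff hw_symm hw_nonneg]
  refine ⟨fun hx => hconn.exists_eq_const_of_forall_adj fun i j hij => ?_,
    fun ⟨c, hc⟩ i j _ => by rw [hc]⟩
  rcases hij.2 with h | h
  · exact hx i j (hw_pos i j h)
  · exact (hx j i (hw_pos j i h)).symm

/-- for a symmetric nonnegative weight matrix with zero diagonal and connected
positive-weight graph, if all edge phase differences satisfy `|θ_i - θ_j| < π/2`, then the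
weighted Laplacian `L(θ)` is positive semidefinite and its kernel is exactly the span of
the all-ones vector. -/
theorem kuramoto_laplacian_posSemidef_ker_span_one (n : ℕ)
    (A : Matrix (Fin n) (Fin n) ℝ) (hsymm : A.IsSymm)
    (hnonneg : ∀ i j, 0 ≤ A i j) (hdiag : ∀ i, A i i = 0)
    (hconn : (SimpleGraph.fromRel (fun i j : Fin n => 0 < A i j)).Connected)
    (θ : Fin n → ℝ)
    (hcoh : ∀ i j, 0 < A i j → |θ i - θ j| < Real.pi / 2) :
    (kuramotoLaplacian n A θ).PosSemidef ∧
    (∀ x : Fin n → ℝ,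
      (kuramotoLaplacian n A θ).mulVec x = 0 ↔ ∃ c : ℝ, x = fun _ => c) :=
  kuramoto_laplacian_posSemidef_ker_span_one_general n A hsymm hnonneg hconn θ hcoh
end

section
/- Let A = (a_{ij}) be an n×n real matrix with nonnegative entries, let ω ∈ ℝ^n, and let θ* ∈ ℝ^n be an equilibrium of the Kuramoto dynamics, i.e. ω_i + Σ_j a_{ij} sin(θ*_j − θ*_i) = 0 for all i. Let γ ∈ (0, π/2] and suppose |θ*_i − θ*_j| ≤ π/2 − γ whenever a_{ij} > 0. Let θ ∈ ℝ^n satisfy max_k |θ_k − θ*_k| < γ, and let i be an index attaining max_k |θ_k − θ*_k|. Then: if θ_i < θ*_i, the Kuramoto velocity at node i is nonnegative, i.e. ω_i + Σ_j a_{ij} sin(θ_j − θ_i) ≥ 0; and if θ_i > θ*_i, then ω_i + Σ_j a_{ij} sin(θ_j − θ_i) ≤ 0. -/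
open Real

lemma sin_perturb_aux (γ x t : ℝ) (hγ : γ ≤ Real.pi / 2)
    (hx : |x| ≤ Real.pi / 2 - γ) (ht : |t| < 2 * γ) :
    (0 ≤ t → Real.sin x ≤ Real.sin (x + t)) ∧
    (t ≤ 0 → Real.sin (x + t) ≤ Real.sin x) := by
  have hkey : Real.sin (x + t) - Real.sin x
      = 2 * Real.sin (t / 2) * Real.cos (x + t / 2) := by
    rw [Real.sin_sub_sin]; ring_nf
  have habs : |x + t / 2| < Real.pi / 2 := by
    have := abs_add_le x (t / 2)
    have h2 : |t / 2| < γ := by rw [abs_div]; simp; linarith [abs_nonneg t]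
    calc |x + t / 2| ≤ |x| + |t / 2| := abs_add_le _ _
      _ < (Real.pi / 2 - γ) + γ := by linarith
      _ = Real.pi / 2 := by ring
  have hcos : 0 ≤ Real.cos (x + t / 2) := by
    have := abs_lt.1 habs
    exact le_of_lt (Real.cos_pos_of_mem_Ioo ⟨by linarith [this.1], this.2⟩)
  have ht2 : |t / 2| < γ := by rw [abs_div]; simp; linarith [abs_nonneg t]
  constructor
  · intro h0
    have hs : 0 ≤ Real.sin (t / 2) := by
      apply Real.sin_nonneg_of_nonneg_of_le_pi (by linarith)
      have := (abs_lt.1 ht2).2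
      linarith [Real.pi_pos]
    nlinarith
  · intro h0
    have hs : Real.sin (t / 2) ≤ 0 := by
      have : Real.sin (-(t / 2)) ≥ 0 := by
        apply Real.sin_nonneg_of_nonneg_of_le_pi (by linarith)
        have := (abs_lt.1 ht2).1
        linarith [Real.pi_pos]
      rw [Real.sin_neg] at this; linarith
    nlinarith

/-- let `θ*` be an equilibrium of the Kuramoto dynamics with nonnegative
weights, `γ ∈ (0, π/2]` with `|θ*_i - θ*_j| ≤ π/2 - γ` on all edges, and `θ` a state with
`max_k |θ_k - θ*_k| < γ` attained at index `i`. If `θ_i < θ*_i` the Kuramoto velocity at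
`i` is nonnegative; if `θ_i > θ*_i` it is nonpositive. -/
theorem velocity_sign_at_max_perturbed_node (n : ℕ)
    (A : Matrix (Fin n) (Fin n) ℝ) (hnonneg : ∀ i j, 0 ≤ A i j)
    (ω θs : Fin n → ℝ)
    (heq : ∀ i, ω i + ∑ j, A i j * Real.sin (θs j - θs i) = 0)
    (γ : ℝ) (hγ0 : 0 < γ) (hγ2 : γ ≤ Real.pi / 2)
    (hcoh : ∀ i j, 0 < A i j → |θs i - θs j| ≤ Real.pi / 2 - γ)
    (θ : Fin n → ℝ) (hpert : ∀ k, |θ k - θs k| < γ)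
    (i : Fin n) (hmax : ∀ k, |θ k - θs k| ≤ |θ i - θs i|) :
    (θ i < θs i → 0 ≤ ω i + ∑ j, A i j * Real.sin (θ j - θ i)) ∧
    (θs i < θ i → ω i + ∑ j, A i j * Real.sin (θ j - θ i) ≤ 0) := by
  have hω : ω i = -∑ j, A i j * Real.sin (θs j - θs i) := by linarith [heq i]
  -- setup per-edge facts
  have key : ∀ j : Fin n, 0 < A i j →
      (θ i < θs i → Real.sin (θs j - θs i) ≤ Real.sin (θ j - θ i)) ∧
      (θs i < θ i → Real.sin (θ j - θ i) ≤ Real.sin (θs j - θs i)) := by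
    intro j hA
    set x := θs j - θs i with hxd
    set t := (θ j - θs j) - (θ i - θs i) with htd
    have hxt : θ j - θ i = x + t := by rw [hxd, htd]; ring
    have hxabs : |x| ≤ Real.pi / 2 - γ := by
      have := hcoh i j hA
      rw [abs_sub_comm] at this
      exact this
    have htabs : |t| < 2 * γ := by
      calc |t| ≤ |θ j - θs j| + |θ i - θs i| := abs_sub _ _
        _ ≤ |θ i - θs i| + |θ i - θs i| := by linarith [hmax j]
        _ < 2 * γ := by linarith [hpert i]
    have haux := sin_perturb_aux γ x t hγ2 hxabs htabs
    constructor
    · intro hlt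
      have hδi : θ i - θs i < 0 := by linarith
      have h0t : 0 ≤ t := by
        have := hmax j
        rw [abs_of_neg hδi] at this
        linarith [neg_abs_le (θ j - θs j)]
      rw [hxt]; exact haux.1 h0t
    · intro hlt
      have hδi : 0 < θ i - θs i := by linarith
      have h0t : t ≤ 0 := by
        have := hmax j
        rw [abs_of_pos hδi] at this
        linarith [le_abs_self (θ j - θs j)]
      rw [hxt]; exact haux.2 h0t
  constructor
  · intro hlt
    rw [hω]
    have : ∑ j, A i j * Real.sin (θs j - θs i) ≤ ∑ j, A i j * Real.sin (θ j - θ i) := by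
      apply Finset.sum_le_sum
      intro j _
      rcases (hnonneg i j).lt_or_eq with h | h
      · exact mul_le_mul_of_nonneg_left ((key j h).1 hlt) (le_of_lt h)
      · rw [← h]; simp
    linarith
  · intro hlt
    rw [hω]
    have : ∑ j, A i j * Real.sin (θ j - θ i) ≤ ∑ j, A i j * Real.sin (θs j - θs i) := by
      apply Finset.sum_le_sum
      intro j _
      rcases (hnonneg i j).lt_or_eq with h | h
      · exact mul_le_mul_of_nonneg_left ((key j h).2 hlt) (le_of_lt h)
      · rw [← h]; simp
    linarith
end

section
/- Let A = (a_{ij}) be a symmetric n×n real matrix with nonnegative entries such that the graph on {1, ..., n} whose edges are the pairs with a_{ij} > 0 is connected, let ω ∈ ℝ^n, and let θ* ∈ ℝ^n be an equilibrium of the Kuramoto dynamics. Let γ ∈ (0, π/2] and suppose |θ*_i − θ*_j| ≤ π/2 − γ whenever a_{ij} > 0. If θ ∈ ℝ^n satisfies max_k |θ_k − θ*_k| < γ and θ is also an equilibrium of the Kuramoto dynamics, then θ = θ* + c·(1, ..., 1) for some constant c ∈ ℝ. -/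
/-- with symmetric nonnegative weights whose positive-weight graph is
connected, if `θ*` is an equilibrium with `|θ*_i - θ*_j| ≤ π/2 - γ` on all edges for some
`γ ∈ (0, π/2]`, then any equilibrium `θ` with `max_k |θ_k - θ*_k| < γ` is a global
rotation of `θ*`. -/
theorem equilibrium_near_cohesive_is_rotation (n : ℕ)
    (A : Matrix (Fin n) (Fin n) ℝ) (hsymm : A.IsSymm) (hnonneg : ∀ i j, 0 ≤ A i j)
    (hconn : (SimpleGraph.fromRel (fun i j : Fin n => 0 < A i j)).Connected)
    (ω θs : Fin n → ℝ)
    (heq : ∀ i, ω i + ∑ j, A i j * Real.sin (θs j - θs i) = 0)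
    (γ : ℝ) (hγ0 : 0 < γ) (hγ2 : γ ≤ Real.pi / 2)
    (hcoh : ∀ i j, 0 < A i j → |θs i - θs j| ≤ Real.pi / 2 - γ)
    (θ : Fin n → ℝ) (hpert : ∀ k, |θ k - θs k| < γ)
    (heq' : ∀ i, ω i + ∑ j, A i j * Real.sin (θ j - θ i) = 0) :
    ∃ c : ℝ, θ = fun i => θs i + c := by
  have hpi := Real.pi_pos
  set G := SimpleGraph.fromRel (fun i j : Fin n => 0 < A i j) with hG
  have hne : Nonempty (Fin n) := hconn.nonempty
  obtain ⟨i, -, hi⟩ := Finset.exists_max_image (Finset.univ : Finset (Fin n))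
    (fun k => θ k - θs k) Finset.univ_nonempty
  -- key step: if k attains the max and l is adjacent to k, then l attains the max
  have key : ∀ k, θ k - θs k = θ i - θs i → ∀ l, G.Adj k l →
      θ l - θs l = θ i - θs i := by
    intro k hk l hkl
    have hsum : ∑ j, (A k j * Real.sin (θ j - θ k) - A k j * Real.sin (θs j - θs k)) = 0 := by
      rw [Finset.sum_sub_distrib]
      have h1 := heq k; have h2 := heq' k
      linarith
    have hterm : ∀ j, A k j * Real.sin (θ j - θ k) - A k j * Real.sin (θs j - θs k)
        = A k j * (2 * Real.sin (((θ j - θs j) - (θ k - θs k)) / 2) *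
            Real.cos (((θ j - θ k) + (θs j - θs k)) / 2)) := by
      intro j
      rw [← mul_sub, Real.sin_sub_sin]
      congr 2
      ring_nf
    have hfacts : ∀ j, 0 < A k j →
        0 < Real.cos (((θ j - θ k) + (θs j - θs k)) / 2) ∧
        Real.sin (((θ j - θs j) - (θ k - θs k)) / 2) ≤ 0 := by
      intro j hAj
      have hb : |θs j - θs k| ≤ Real.pi / 2 - γ := by
        have := hcoh k j hAj; rwa [abs_sub_comm] at this
      obtain ⟨hjk1, hjk2⟩ := abs_lt.mp (hpert j)
      obtain ⟨hkk1, hkk2⟩ := abs_lt.mp (hpert k)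
      have hujk : (θ j - θs j) - (θ k - θs k) ≤ 0 := by
        have := hi j (Finset.mem_univ j); linarith [hk ▸ this]
      have hmid : |(((θ j - θ k) + (θs j - θs k)) / 2)| < Real.pi / 2 := by
        have h1 : ((θ j - θ k) + (θs j - θs k)) / 2
            = (θs j - θs k) + ((θ j - θs j) - (θ k - θs k)) / 2 := by ring
        rw [h1]
        have h2 : |((θ j - θs j) - (θ k - θs k)) / 2| < γ := by
          rw [abs_div, abs_two, div_lt_iff₀ (by norm_num : (0:ℝ) < 2), abs_sub_lt_iff]
          constructor <;> linarith
        calc |(θs j - θs k) + ((θ j - θs j) - (θ k - θs k)) / 2|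
            ≤ |θs j - θs k| + |((θ j - θs j) - (θ k - θs k)) / 2| := abs_add_le _ _
          _ < (Real.pi / 2 - γ) + γ := by linarith
          _ = Real.pi / 2 := by ring
      obtain ⟨hm1, hm2⟩ := abs_lt.mp hmid
      refine ⟨Real.cos_pos_of_mem_Ioo ⟨by linarith, hm2⟩, ?_⟩
      have h1 : ((θ j - θs j) - (θ k - θs k)) / 2 ≤ 0 := by linarith
      have h2 : -(Real.pi) ≤ ((θ j - θs j) - (θ k - θs k)) / 2 := by linarith
      calc Real.sin (((θ j - θs j) - (θ k - θs k)) / 2)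
          = -Real.sin (-(((θ j - θs j) - (θ k - θs k)) / 2)) := by
            rw [Real.sin_neg]; ring
        _ ≤ 0 := by
            have : 0 ≤ Real.sin (-(((θ j - θs j) - (θ k - θs k)) / 2)) :=
              Real.sin_nonneg_of_nonneg_of_le_pi (by linarith) (by linarith)
            linarith
    have hnonpos : ∀ j ∈ Finset.univ,
        A k j * Real.sin (θ j - θ k) - A k j * Real.sin (θs j - θs k) ≤ 0 := by
      intro j _
      rw [hterm j]
      rcases eq_or_lt_of_le (hnonneg k j) with h | h
      · rw [← h]; simp
      · obtain ⟨hc, hs⟩ := hfacts j h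
        apply mul_nonpos_of_nonneg_of_nonpos (le_of_lt h)
        have h2 : 2 * Real.sin (((θ j - θs j) - (θ k - θs k)) / 2) ≤ 0 := by linarith
        exact mul_nonpos_of_nonpos_of_nonneg h2 (le_of_lt hc)
    have hall0 := (Finset.sum_eq_zero_iff_of_nonpos hnonpos).mp hsum
    -- apply to j = l
    have hAkl : 0 < A k l := by
      rw [hG, SimpleGraph.fromRel_adj] at hkl
      rcases hkl.2 with h | h
      · exact h
      · have hlk : A l k = A k l := congrFun (congrFun hsymm k) l
        rwa [hlk] at h
    have h0 := hall0 l (Finset.mem_univ l)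
    rw [hterm l] at h0
    obtain ⟨hc, -⟩ := hfacts l hAkl
    have hs0 : Real.sin (((θ l - θs l) - (θ k - θs k)) / 2) = 0 := by
      rcases mul_eq_zero.mp h0 with h | h
      · exact absurd h (ne_of_gt hAkl)
      · rcases mul_eq_zero.mp h with h | h
        · rcases mul_eq_zero.mp h with h | h
          · norm_num at h
          · exact h
        · exact absurd h (ne_of_gt hc)
    obtain ⟨hjk1, hjk2⟩ := abs_lt.mp (hpert l)
    obtain ⟨hkk1, hkk2⟩ := abs_lt.mp (hpert k)
    have harg : ((θ l - θs l) - (θ k - θs k)) / 2 = 0 := by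
      have h1 : -Real.pi < ((θ l - θs l) - (θ k - θs k)) / 2 := by linarith
      have h2 : ((θ l - θs l) - (θ k - θs k)) / 2 < Real.pi := by linarith
      exact (Real.sin_eq_zero_iff_of_lt_of_lt h1 h2).mp hs0
    have : θ l - θs l = θ k - θs k := by linarith
    rw [this, hk]
  -- spread along walks
  have spread : ∀ {a b : Fin n} (_ : G.Walk a b),
      θ a - θs a = θ i - θs i → θ b - θs b = θ i - θs i := by
    intro a b w
    induction w with
    | nil => exact id
    | cons h _ ih => intro ha; exact ih (key _ ha _ h)
  refine ⟨θ i - θs i, funext fun j => ?_⟩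
  obtain ⟨w⟩ := hconn.preconnected i j
  have := spread w rfl
  linarith
end

section
/- (Infinity-norm nonexpansion) Let A = (a_{ij}) be a symmetric n×n real matrix with nonnegative entries, let ω ∈ ℝ^n, and let θ* ∈ ℝ^n be an equilibrium of the Kuramoto dynamics. Let γ ∈ (0, π/2] and suppose |θ*_i − θ*_j| ≤ π/2 − γ whenever a_{ij} > 0. Let θ : [0, ∞) → ℝ^n be a differentiable solution of the Kuramoto dynamics, i.e. θ̇_i(t) = ω_i + Σ_j a_{ij} sin(θ_j(t) − θ_i(t)) for all i and t ≥ 0, with max_k |θ_k(0) − θ*_k| < γ. Then the function t ↦ max_k |θ_k(t) − θ*_k| is nonincreasing on [0, ∞); in particular the open infinity-ball of radius γ around θ* is forward-invariant. -/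
/-!
Write `e = θ - θ*` and `m = ‖e‖∞`. If `m ≤ γ` and coordinate `k` attains `e_k = m`, then for every
edge `(k, j)` the phase difference `θ_j - θ_k` is `θ*_j - θ*_k` shifted down by at most `2γ`; since
`|θ*_j - θ*_k| ≤ π/2 - γ`, the midpoint of the two stays in `[-π/2, π/2]`, so by the sum-to-product
formula `sin (θ_j - θ_k) ≤ sin (θ*_j - θ*_k)`. Summing against the equilibrium equation gives
`θ̇_k ≤ 0`; by the odd symmetry of the model, `θ̇_k ≥ 0` where `e_k = -m`. Hence the right Dini
derivative of `m` is nonpositive inside the closed ball, and comparing `m` with the barriers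
`m(a) + ε (t - a)` by continuous induction shows that `m` cannot increase.
-/

open Real Set Filter Topology

theorem sin_le_sin_of_abs_add_le_pi {x y : ℝ} (hxy : x ≤ y) (hyx : y - x ≤ 2 * π)
    (hmid : |x + y| ≤ π) : sin x ≤ sin y := by
  obtain ⟨hmid₁, hmid₂⟩ := abs_le.1 hmid
  have hs : 0 ≤ sin ((y - x) / 2) := sin_nonneg_of_nonneg_of_le_pi (by linarith) (by linarith)
  have hc : 0 ≤ cos ((y + x) / 2) := cos_nonneg_of_mem_Icc ⟨by linarith, by linarith⟩
  have := sin_sub_sin y x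
  nlinarith [mul_nonneg hs hc]

theorem pi_norm_eq_iSup_abs {ι : Type*} [Fintype ι] (v : ι → ℝ) : ‖v‖ = ⨆ i, |v i| :=
  le_antisymm
    ((pi_norm_le_iff_of_nonneg (Real.iSup_nonneg fun _ => abs_nonneg _)).2 fun i =>
      le_ciSup (f := fun i => |v i|) (Finite.bddAbove_range _) i)
    (Real.iSup_le (fun i => norm_le_pi_norm v i) (norm_nonneg v))

theorem HasDerivWithinAt.eventually_lt_add_mul_sub {f : ℝ → ℝ} {f' x M r : ℝ}
    (hf : HasDerivWithinAt f f' (Ioi x) x) (hM : f x ≤ M) (hr : f x = M → f' < r) :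
    ∀ᶠ z in 𝓝[>] x, f z < M + r * (z - x) := by
  rcases hM.lt_or_eq with hlt | heq
  · have hB : Tendsto (fun z => M + r * (z - x)) (𝓝[>] x) (𝓝 M) :=
      tendsto_nhdsWithin_of_tendsto_nhds <|
        (by fun_prop : Continuous fun z => M + r * (z - x)).tendsto' x M (by simp)
    exact hf.continuousWithinAt.tendsto.eventually_lt hB hlt
  · have hslope := (hasDerivWithinAt_iff_tendsto_slope' self_notMem_Ioi).1 hf
    filter_upwards [hslope.eventually_lt_const (hr heq), self_mem_nhdsWithin] with z hz hxz
    rw [slope_def_field, div_lt_iff₀ (sub_pos.2 hxz)] at hz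
    linarith

theorem HasDerivWithinAt.eventually_abs_lt_add_mul_sub {f : ℝ → ℝ} {f' x M r : ℝ}
    (hf : HasDerivWithinAt f f' (Ioi x) x) (hM : |f x| ≤ M) (hr : f x = M → f' < r)
    (hr' : -f x = M → -f' < r) :
    ∀ᶠ z in 𝓝[>] x, |f z| < M + r * (z - x) := by
  filter_upwards [hf.eventually_lt_add_mul_sub ((le_abs_self (f x)).trans hM) hr,
    hf.neg.eventually_lt_add_mul_sub ((neg_le_abs (f x)).trans hM) hr'] with z hz hz'
  exact abs_lt.2 ⟨neg_lt.1 hz', hz⟩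

namespace Kuramoto

noncomputable def field {n : ℕ} (A : Matrix (Fin n) (Fin n) ℝ) (ω θ : Fin n → ℝ) (i : Fin n) : ℝ :=
  ω i + ∑ j, A i j * sin (θ j - θ i)

variable {n : ℕ} {A : Matrix (Fin n) (Fin n) ℝ} {ω θs : Fin n → ℝ} {γ : ℝ}

theorem field_neg (A : Matrix (Fin n) (Fin n) ℝ) (ω θ : Fin n → ℝ) :
    field A (-ω) (-θ) = -field A ω θ := by
  ext i
  simp only [field, Pi.neg_apply, neg_sub_neg, ← neg_sub (θ _) (θ i), sin_neg, mul_neg,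
    Finset.sum_neg_distrib, neg_add]

theorem field_nonpos_of_eq_norm (hA : ∀ i j, 0 ≤ A i j)
    (heq : ∀ i, field A ω θs i = 0)
    (hcoh : ∀ i j, 0 < A i j → |θs i - θs j| ≤ π / 2 - γ)
    {φ : Fin n → ℝ} (hφ : ‖φ - θs‖ ≤ γ) {k : Fin n} (hk : φ k - θs k = ‖φ - θs‖) :
    field A ω φ k ≤ 0 := by
  have hdiff : field A ω φ k
      = ∑ j, A k j * (sin (φ j - φ k) - sin (θs j - θs k)) := by
    rw [← sub_zero (field A ω φ k), ← heq k]
    simp only [field, mul_sub, Finset.sum_sub_distrib]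
    ring
  rw [hdiff]
  refine Finset.sum_nonpos fun j _ => ?_
  rcases (hA k j).eq_or_lt with hzero | hpos
  · simp [← hzero]
  refine mul_nonpos_of_nonneg_of_nonpos hpos.le (sub_nonpos.2 ?_)
  obtain ⟨hδ₁, hδ₂⟩ := abs_le.1 (hcoh k j hpos)
  obtain ⟨hj₁, hj₂⟩ := abs_le.1 (norm_le_pi_norm (φ - θs) j)
  simp only [Pi.sub_apply] at hj₁ hj₂
  exact sin_le_sin_of_abs_add_le_pi (by linarith) (by linarith)
    (abs_le.2 ⟨by linarith, by linarith⟩)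

theorem field_nonneg_of_eq_neg_norm (hA : ∀ i j, 0 ≤ A i j)
    (heq : ∀ i, field A ω θs i = 0)
    (hcoh : ∀ i j, 0 < A i j → |θs i - θs j| ≤ π / 2 - γ)
    {φ : Fin n → ℝ} (hφ : ‖φ - θs‖ ≤ γ) {k : Fin n} (hk : φ k - θs k = -‖φ - θs‖) :
    0 ≤ field A ω φ k := by
  have hnorm : ‖-φ - -θs‖ = ‖φ - θs‖ := by rw [neg_sub_neg, norm_sub_rev]
  have := field_nonpos_of_eq_norm (ω := -ω) (θs := -θs) (φ := -φ) (k := k) hA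
    (fun i => by simp [field_neg, heq i])
    (fun i j h => by rw [Pi.neg_apply, Pi.neg_apply, neg_sub_neg, abs_sub_comm]; exact hcoh i j h)
    (hnorm ▸ hφ) (by rw [hnorm, Pi.neg_apply, Pi.neg_apply]; linarith)
  simpa [field_neg] using this

theorem eventually_norm_sub_le_add_mul_sub (hA : ∀ i j, 0 ≤ A i j)
    (heq : ∀ i, field A ω θs i = 0)
    (hcoh : ∀ i j, 0 < A i j → |θs i - θs j| ≤ π / 2 - γ) {θ : ℝ → Fin n → ℝ}
    (hsol : ∀ t ∈ Ici (0 : ℝ), ∀ i, HasDerivAt (fun s => θ s i) (field A ω (θ t) i) t)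
    {x ε : ℝ} (hx : 0 ≤ x) (hε : 0 < ε) (hγ : ‖θ x - θs‖ ≤ γ) :
    ∀ᶠ z in 𝓝[>] x, ‖θ z - θs‖ ≤ ‖θ x - θs‖ + ε * (z - x) := by
  have hcoord : ∀ k, ∀ᶠ z in 𝓝[>] x, |θ z k - θs k| < ‖θ x - θs‖ + ε * (z - x) := fun k =>
    ((hsol x hx k).sub_const (θs k)).hasDerivWithinAt.eventually_abs_lt_add_mul_sub
      (norm_le_pi_norm (θ x - θs) k)
      (fun h => (field_nonpos_of_eq_norm hA heq hcoh hγ h).trans_lt hε)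
      (fun h => (neg_nonpos.2 <|
        field_nonneg_of_eq_neg_norm hA heq hcoh hγ (neg_eq_iff_eq_neg.1 h)).trans_lt hε)
  filter_upwards [eventually_all.2 hcoord, self_mem_nhdsWithin] with z hz hxz
  have hB : 0 ≤ ‖θ x - θs‖ + ε * (z - x) :=
    add_nonneg (norm_nonneg _) (mul_nonneg hε.le (sub_nonneg.2 (le_of_lt hxz)))
  exact (pi_norm_le_iff_of_nonneg hB).2 fun k => (hz k).le

theorem norm_sub_le_add_mul_sub (hA : ∀ i j, 0 ≤ A i j)
    (heq : ∀ i, field A ω θs i = 0)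
    (hcoh : ∀ i j, 0 < A i j → |θs i - θs j| ≤ π / 2 - γ) {θ : ℝ → Fin n → ℝ}
    (hsol : ∀ t ∈ Ici (0 : ℝ), ∀ i, HasDerivAt (fun s => θ s i) (field A ω (θ t) i) t)
    {a b ε : ℝ} (ha : 0 ≤ a) (hε : 0 < ε) (hbγ : ‖θ a - θs‖ + ε * (b - a) < γ) :
    ∀ t ∈ Icc a b, ‖θ t - θs‖ ≤ ‖θ a - θs‖ + ε * (t - a) := by
  have hcont : ContinuousOn (fun t => ‖θ t - θs‖) (Icc a b) := fun t ht =>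
    ((continuousAt_pi.2 fun k => (hsol t (ha.trans ht.1) k).continuousAt).sub
      continuousAt_const).norm.continuousWithinAt
  have hclosed :
      IsClosed ({t | ‖θ t - θs‖ ≤ ‖θ a - θs‖ + ε * (t - a)} ∩ Icc a b) := by
    rw [inter_comm]
    exact isClosed_Icc.isClosed_le hcont (by fun_prop)
  refine fun t ht => hclosed.Icc_subset_of_forall_mem_nhdsWithin (by simp)
    (fun x ⟨(hxB : ‖θ x - θs‖ ≤ _), hx⟩ => ?_) ht
  have hxγ : ‖θ x - θs‖ ≤ γ := by
    have : ε * (x - a) ≤ ε * (b - a) := by gcongr; exact hx.2.le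
    linarith
  filter_upwards [eventually_norm_sub_le_add_mul_sub hA heq hcoh hsol (ha.trans hx.1) hε hxγ]
    with z hz
  linarith

theorem norm_sub_le_norm_sub_of_le (hA : ∀ i j, 0 ≤ A i j)
    (heq : ∀ i, field A ω θs i = 0)
    (hcoh : ∀ i j, 0 < A i j → |θs i - θs j| ≤ π / 2 - γ) {θ : ℝ → Fin n → ℝ}
    (hsol : ∀ t ∈ Ici (0 : ℝ), ∀ i, HasDerivAt (fun s => θ s i) (field A ω (θ t) i) t)
    {a b : ℝ} (ha : 0 ≤ a) (hab : a ≤ b) (hγ : ‖θ a - θs‖ < γ) :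
    ‖θ b - θs‖ ≤ ‖θ a - θs‖ := by
  have hlim : Tendsto (fun ε => ‖θ a - θs‖ + ε * (b - a)) (𝓝[>] 0) (𝓝 ‖θ a - θs‖) :=
    tendsto_nhdsWithin_of_tendsto_nhds <|
      (by fun_prop : Continuous fun ε => ‖θ a - θs‖ + ε * (b - a)).tendsto' 0 _ (by simp)
  refine ge_of_tendsto hlim ?_
  filter_upwards [hlim.eventually (gt_mem_nhds hγ), self_mem_nhdsWithin] with ε hεγ hε
  exact norm_sub_le_add_mul_sub hA heq hcoh hsol ha hε hεγ b ⟨hab, le_rfl⟩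

end Kuramoto

theorem infinity_norm_nonexpansion_general (n : ℕ)
    (A : Matrix (Fin n) (Fin n) ℝ) (hnonneg : ∀ i j, 0 ≤ A i j)
    (ω θs : Fin n → ℝ)
    (heq : ∀ i, ω i + ∑ j, A i j * Real.sin (θs j - θs i) = 0)
    (γ : ℝ)
    (hcoh : ∀ i j, 0 < A i j → |θs i - θs j| ≤ Real.pi / 2 - γ)
    (θ : ℝ → Fin n → ℝ)
    (hsol : ∀ t ∈ Set.Ici (0 : ℝ), ∀ i,
      HasDerivAt (fun s => θ s i) (ω i + ∑ j, A i j * Real.sin (θ t j - θ t i)) t)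
    (hinit : ∀ k, |θ 0 k - θs k| < γ) :
    AntitoneOn (fun t => ⨆ k, |θ t k - θs k|) (Set.Ici (0 : ℝ)) ∧
    ∀ t ∈ Set.Ici (0 : ℝ), ∀ k, |θ t k - θs k| < γ := by
  obtain hn | ⟨⟨k₀⟩⟩ := isEmpty_or_nonempty (Fin n)
  · exact ⟨fun a _ b _ _ => by simp, fun _ _ k => isEmptyElim k⟩
  have h0 : ‖θ 0 - θs‖ < γ := (pi_norm_lt_iff ((abs_nonneg _).trans_lt (hinit k₀))).2 hinit
  have hball (t : ℝ) (ht : t ∈ Ici 0) : ‖θ t - θs‖ < γ :=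
    (Kuramoto.norm_sub_le_norm_sub_of_le hnonneg heq hcoh hsol le_rfl ht h0).trans_lt h0
  have hsup : (fun t => ⨆ k, |θ t k - θs k|) = fun t => ‖θ t - θs‖ :=
    funext fun t => (pi_norm_eq_iSup_abs (θ t - θs)).symm
  rw [hsup]
  exact ⟨fun a ha b _ hab =>
      Kuramoto.norm_sub_le_norm_sub_of_le hnonneg heq hcoh hsol ha hab (hball a ha),
    fun t ht k => (norm_le_pi_norm (θ t - θs) k).trans_lt (hball t ht)⟩

/-- Infinity-norm nonexpansion: let `θ*` be an equilibrium of the Kuramoto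
dynamics with symmetric nonnegative weights and `|θ*_i - θ*_j| ≤ π/2 - γ` on all edges for
some `γ ∈ (0, π/2]`. Then along any differentiable solution starting in the open
infinity-ball of radius `γ` around `θ*`, the function `t ↦ max_k |θ_k(t) - θ*_k|` is
nonincreasing on `[0, ∞)`; in particular, the ball is forward-invariant. -/
theorem infinity_norm_nonexpansion (n : ℕ)
    (A : Matrix (Fin n) (Fin n) ℝ) (hsymm : A.IsSymm) (hnonneg : ∀ i j, 0 ≤ A i j)
    (ω θs : Fin n → ℝ)
    (heq : ∀ i, ω i + ∑ j, A i j * Real.sin (θs j - θs i) = 0)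
    (γ : ℝ) (hγ0 : 0 < γ) (hγ2 : γ ≤ Real.pi / 2)
    (hcoh : ∀ i j, 0 < A i j → |θs i - θs j| ≤ Real.pi / 2 - γ)
    (θ : ℝ → Fin n → ℝ)
    (hsol : ∀ t ∈ Set.Ici (0 : ℝ), ∀ i,
      HasDerivAt (fun s => θ s i) (ω i + ∑ j, A i j * Real.sin (θ t j - θ t i)) t)
    (hinit : ∀ k, |θ 0 k - θs k| < γ) :
    AntitoneOn (fun t => ⨆ k, |θ t k - θs k|) (Set.Ici (0 : ℝ)) ∧
    ∀ t ∈ Set.Ici (0 : ℝ), ∀ k, |θ t k - θs k| < γ :=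
  infinity_norm_nonexpansion_general n A hnonneg ω θs heq γ hcoh θ hsol hinit
end

section
/- (Phase-cohesive basins of attraction on general Kuramoto networks) Let A = (a_{ij}) be a symmetric n×n real matrix with nonnegative entries such that the graph on {1, ..., n} whose edges are the pairs with a_{ij} > 0 is connected, and consider the Kuramoto dynamics with identical natural frequencies, which in a rotating frame is θ̇_i = Σ_j a_{ij} sin(θ_j − θ_i). Let θ* ∈ ℝ^n be an equilibrium and let γ ∈ [0, π/2) be such that |θ*_i − θ*_j| < γ whenever a_{ij} > 0. Then for every differentiable solution θ : [0, ∞) → ℝ^n of the dynamics with max_k |θ_k(0) − θ*_k| < π/2 − γ, there exists a constant c ∈ ℝ such that θ(t) converges to θ* + c·(1, ..., 1) as t → ∞. -/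
/-!
In deviation coordinates `x = θ - θ*` the dynamics reads `ẋᵢ = ∑ⱼ Fᵢⱼ` with the antisymmetric
edge flux `Fᵢⱼ = aᵢⱼ (sin (θⱼ - θᵢ) - sin (θ*ⱼ - θ*ᵢ))`, so `∑ᵢ xᵢ` is conserved. As long as
`‖x‖∞ ≤ r < π/2 - γ`, sum-to-product and Jordan's inequality give on every edge
`κ aᵢⱼ (xⱼ - xᵢ)² ≤ (xⱼ - xᵢ) Fᵢⱼ` with `κ = 2 cos (γ + r) / π > 0`.

Sign coherence of the flux makes each power sum `∑ᵢ xᵢ^(2p)` nonincreasing in that box, and for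
large `p` these sums see the sup norm, so the solution never leaves the box. Inside it, the
quantitative bound and the spectral gap of the connected weighted graph give `V' ≤ -κλ V` for
`V = ∑ᵢ (xᵢ - c)²`, `c` the conserved mean, hence `x → c·𝟙` exponentially fast.
-/

open Real Set Filter Topology Finset

theorem lt_of_hasDerivAt_of_deriv_nonpos {f f' : ℝ → ℝ} {b : ℝ}
    (hf : ∀ t ≥ 0, HasDerivAt f (f' t) t) (h0 : f 0 < b)
    (hf' : ∀ t ≥ 0, f t < b → f' t ≤ 0) {t : ℝ} (ht : 0 ≤ t) : f t < b := by
  set ε := (b - f 0) / (t + 1)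
  have hε : 0 < ε := div_pos (sub_pos.2 h0) (by linarith)
  have hεt : f 0 + ε * t < b := by
    have : ε * (t + 1) = b - f 0 := div_mul_cancel₀ _ (by linarith)
    nlinarith
  -- The barrier `f 0 + ε s` has slope `ε > 0 ≥ f'` wherever `f` touches it below `b`.
  have key := image_le_of_deriv_right_lt_deriv_boundary (a := 0) (b := t)
    (B := fun s ↦ f 0 + ε * s)
    (fun s hs ↦ (hf s hs.1).continuousAt.continuousWithinAt)
    (fun s hs ↦ (hf s hs.1).hasDerivWithinAt) (by simp)
    (fun s ↦ ((hasDerivAt_id s).const_mul ε).const_add (f 0))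
    (fun s hs hfs ↦ ?_) ⟨ht, le_rfl⟩
  · exact key.trans_lt hεt
  · have : f s < b := by rw [hfs]; nlinarith [hs.2.le]
    simpa using (hf' s hs.1 this).trans_lt hε

theorem le_mul_exp_of_deriv_le_mul {f f' : ℝ → ℝ} {K : ℝ} (hf : ∀ t ≥ 0, HasDerivAt f (f' t) t)
    (bound : ∀ t ≥ 0, f' t ≤ K * f t) {t : ℝ} (ht : 0 ≤ t) : f t ≤ f 0 * exp (K * t) := by
  have := le_gronwallBound_of_liminf_deriv_right_le (ε := 0) (a := 0) (b := t)
    (fun s hs ↦ (hf s hs.1).continuousAt.continuousWithinAt)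
    (fun s hs r hr ↦ by
      simpa [slope_def_module] using (hf s hs.1).hasDerivWithinAt.liminf_right_slope_le hr)
    le_rfl (fun s hs ↦ by simpa using bound s hs.1) t ⟨ht, le_rfl⟩
  simpa [gronwallBound_ε0] using this

section FiniteSums

variable {ι : Type*} [Fintype ι]

theorem sum_mul_sum_of_antisymm {F : ι → ι → ℝ} (hF : ∀ i j, F j i = -F i j) (u : ι → ℝ) :
    ∑ i, u i * ∑ j, F i j = -(∑ i, ∑ j, (u j - u i) * F i j) / 2 := by
  have hswap : ∑ i, ∑ j, u j * F i j = -∑ i, ∑ j, u i * F i j := by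
    rw [Finset.sum_comm, ← sum_neg_distrib]
    refine sum_congr rfl fun i _ ↦ ?_
    rw [← sum_neg_distrib]
    exact sum_congr rfl fun j _ ↦ by rw [hF, mul_neg]
  simp only [sub_mul, Finset.sum_sub_distrib, hswap, Finset.mul_sum]
  ring

theorem sum_sum_eq_zero_of_antisymm {F : ι → ι → ℝ} (hF : ∀ i j, F j i = -F i j) :
    ∑ i, ∑ j, F i j = 0 := by
  simpa using sum_mul_sum_of_antisymm hF 1

theorem Monotone.sub_mul_nonneg {φ : ℝ → ℝ} (hφ : Monotone φ) {a b g : ℝ}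
    (h : 0 ≤ (b - a) * g) : 0 ≤ (φ b - φ a) * g := by
  rcases lt_trichotomy a b with hab | rfl | hab
  · exact mul_nonneg (sub_nonneg.2 (hφ hab.le)) (nonneg_of_mul_nonneg_right h (sub_pos.2 hab))
  · simp
  · exact mul_nonneg_of_nonpos_of_nonpos (sub_nonpos.2 (hφ hab.le))
      (nonpos_of_mul_nonneg_right h (sub_neg.2 hab))

theorem sum_mul_sum_nonpos_of_monotone {F : ι → ι → ℝ} (hF : ∀ i j, F j i = -F i j)
    {φ : ℝ → ℝ} (hφ : Monotone φ) {y : ι → ℝ} (hy : ∀ i j, 0 ≤ (y j - y i) * F i j) :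
    ∑ i, φ (y i) * ∑ j, F i j ≤ 0 := by
  have : 0 ≤ ∑ i, ∑ j, (φ (y j) - φ (y i)) * F i j :=
    sum_nonneg fun i _ ↦ sum_nonneg fun j _ ↦ hφ.sub_mul_nonneg (hy i j)
  rw [sum_mul_sum_of_antisymm hF]
  linarith

theorem norm_lt_of_sum_pow_lt {y : ι → ℝ} {r : ℝ} (hr : 0 < r) {p : ℕ} (hp : p ≠ 0)
    (h : ∑ k, y k ^ (2 * p) < r ^ (2 * p)) : ‖y‖ < r := by
  refine (pi_norm_lt_iff hr).2 fun k ↦ ?_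
  have hk : y k ^ (2 * p) ≤ ∑ k, y k ^ (2 * p) :=
    single_le_sum (fun j _ ↦ (even_two_mul p).pow_nonneg (y j)) (mem_univ k)
  rw [Real.norm_eq_abs, ← pow_lt_pow_iff_left₀ (abs_nonneg _) hr.le (by omega : 2 * p ≠ 0),
    (even_two_mul p).pow_abs]
  linarith

theorem exists_sum_pow_lt_of_norm_lt {y : ι → ℝ} {r : ℝ} (h : ‖y‖ < r) :
    ∃ p ≠ 0, ∑ k, y k ^ (2 * p) < r ^ (2 * p) := by
  have hr : 0 < r := (norm_nonneg y).trans_lt h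
  have hlim : Tendsto (fun p : ℕ ↦ ∑ k, ((y k / r) ^ 2) ^ p) atTop (𝓝 0) := by
    simpa using tendsto_finsetSum univ fun k _ ↦
      tendsto_pow_atTop_nhds_zero_of_lt_one (sq_nonneg (y k / r)) <|
        (sq_lt_one_iff_abs_lt_one _).2 <| by
          rw [abs_div, abs_of_pos hr, div_lt_one hr]
          exact (norm_le_pi_norm y k).trans_lt h
  obtain ⟨p, hp1, hp0⟩ := ((hlim.eventually (gt_mem_nhds one_pos)).and
    (eventually_ne_atTop 0)).exists
  refine ⟨p, hp0, ?_⟩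
  simp only [← pow_mul, div_pow, ← sum_div] at hp1
  rwa [div_lt_one (by positivity)] at hp1

end FiniteSums

section FluxDynamics

variable {ι : Type*} [Fintype ι] {F : ℝ → ι → ι → ℝ} {x : ℝ → ι → ℝ}

theorem norm_lt_of_antisymm_flux {r : ℝ} (hanti : ∀ t i j, F t j i = -F t i j)
    (hx : ∀ t ≥ 0, ∀ i, HasDerivAt (fun s ↦ x s i) (∑ j, F t i j) t)
    (hcoh : ∀ t ≥ 0, ‖x t‖ < r → ∀ i j, 0 ≤ (x t j - x t i) * F t i j)
    (h0 : ‖x 0‖ < r) {t : ℝ} (ht : 0 ≤ t) : ‖x t‖ < r := by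
  have hr : 0 < r := (norm_nonneg _).trans_lt h0
  obtain ⟨p, hp, hW0⟩ := exists_sum_pow_lt_of_norm_lt h0
  have hφ : Monotone fun y : ℝ ↦ ((2 * p : ℕ) : ℝ) * y ^ (2 * p - 1) :=
    (Odd.strictMono_pow ⟨p - 1, by omega⟩).monotone.const_mul (by positivity)
  refine norm_lt_of_sum_pow_lt hr hp <| lt_of_hasDerivAt_of_deriv_nonpos
    (fun t ht ↦ HasDerivAt.fun_sum fun k _ ↦ (hx t ht k).pow (2 * p)) hW0 (fun t ht hWt ↦ ?_) ht
  exact sum_mul_sum_nonpos_of_monotone (hanti t) hφ (hcoh t ht (norm_lt_of_sum_pow_lt hr hp hWt))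

theorem sum_sub_div_card_eq_zero (y : ι → ℝ) : ∑ i, (y i - (∑ j, y j) / Fintype.card ι) = 0 := by
  rcases isEmpty_or_nonempty ι with hι | hι
  · simp
  · rw [sum_sub_distrib, sum_const, card_univ, nsmul_eq_mul, mul_div_cancel₀ _ (by positivity),
      sub_self]

theorem sum_eq_of_antisymm_flux (hanti : ∀ t i j, F t j i = -F t i j)
    (hx : ∀ t ≥ 0, ∀ i, HasDerivAt (fun s ↦ x s i) (∑ j, F t i j) t) {t : ℝ} (ht : 0 ≤ t) :
    ∑ i, x t i = ∑ i, x 0 i := by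
  have hS : ∀ s ≥ 0, HasDerivAt (fun s ↦ ∑ i, x s i) 0 s := fun s hs ↦ by
    have h := HasDerivAt.fun_sum fun i (_ : i ∈ Finset.univ) ↦ hx s hs i
    rwa [sum_sum_eq_zero_of_antisymm (hanti s)] at h
  exact constant_of_has_deriv_right_zero (fun s hs ↦ (hS s hs.1).continuousAt.continuousWithinAt)
    (fun s hs ↦ (hS s hs.1).hasDerivWithinAt) t ⟨ht, le_rfl⟩

theorem exists_tendsto_const_of_antisymm_flux {w : ι → ι → ℝ} {μ : ℝ} (hμ : 0 < μ)
    (hgap : ∀ y : ι → ℝ, ∑ i, y i = 0 → μ * ∑ i, y i ^ 2 ≤ ∑ i, ∑ j, w i j * (y j - y i) ^ 2)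
    (hanti : ∀ t i j, F t j i = -F t i j)
    (hx : ∀ t ≥ 0, ∀ i, HasDerivAt (fun s ↦ x s i) (∑ j, F t i j) t)
    (hdiss : ∀ t ≥ 0, ∀ i j, w i j * (x t j - x t i) ^ 2 ≤ (x t j - x t i) * F t i j) :
    ∃ c, Tendsto x atTop (𝓝 fun _ ↦ c) := by
  set c := (∑ i, x 0 i) / Fintype.card ι
  set V := fun t ↦ ∑ i, (x t i - c) ^ 2
  have hV : ∀ t ≥ 0, HasDerivAt V (∑ i, 2 * (x t i - c) * ∑ j, F t i j) t := fun t ht ↦ by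
    simpa using HasDerivAt.fun_sum fun i _ ↦ ((hx t ht i).sub_const c).pow 2
  have hV' : ∀ t ≥ 0, ∑ i, 2 * (x t i - c) * ∑ j, F t i j ≤ -μ * V t := fun t ht ↦ by
    have hmean : ∑ i, (x t i - c) = 0 := by
      simpa [c, sum_eq_of_antisymm_flux hanti hx ht] using sum_sub_div_card_eq_zero (x t)
    have hgapt := hgap _ hmean
    have hsum : ∑ i, ∑ j, w i j * (x t j - x t i) ^ 2 ≤ ∑ i, ∑ j, (x t j - x t i) * F t i j :=
      sum_le_sum fun i _ ↦ sum_le_sum fun j _ ↦ hdiss t ht i j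
    simp only [sub_sub_sub_cancel_right] at hgapt
    rw [sum_mul_sum_of_antisymm (hanti t)]
    simp only [← mul_sub, mul_assoc, ← mul_sum, sub_sub_sub_cancel_right, V]
    linarith
  have hdecay : Tendsto V atTop (𝓝 0) := by
    refine squeeze_zero' (.of_forall fun t ↦ sum_nonneg fun i _ ↦ sq_nonneg _)
      (eventually_ge_atTop 0 |>.mono fun t ht ↦ le_mul_exp_of_deriv_le_mul hV hV' ht) ?_
    simpa using (tendsto_exp_neg_atTop_nhds_zero.comp
      (tendsto_id.const_mul_atTop hμ)).const_mul (V 0)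
  refine ⟨c, tendsto_pi_nhds.2 fun i ↦ tendsto_iff_norm_sub_tendsto_zero.2 ?_⟩
  refine squeeze_zero (fun t ↦ norm_nonneg _) (fun t ↦ Real.abs_le_sqrt ?_)
    (by simpa using hdecay.sqrt)
  exact single_le_sum (f := fun i ↦ (x t i - c) ^ 2) (fun i _ ↦ sq_nonneg _) (mem_univ i)

end FluxDynamics

theorem exists_pos_mul_norm_sq_le {E : Type*} [NormedAddCommGroup E] [NormedSpace ℝ E]
    [FiniteDimensional ℝ E] {Q : E → ℝ} (hQ : Continuous Q)
    (hhom : ∀ (c : ℝ) (y : E), Q (c • y) = c ^ 2 * Q y) (hpos : ∀ y, y ≠ 0 → 0 < Q y) :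
    ∃ μ > 0, ∀ y, μ * ‖y‖ ^ 2 ≤ Q y := by
  have hQ0 : Q 0 = 0 := by simpa using hhom 0 0
  rcases subsingleton_or_nontrivial E with hE | hE
  · exact ⟨1, one_pos, fun y ↦ by simp [Subsingleton.elim y 0, hQ0]⟩
  obtain ⟨u, hu, hmin⟩ := (isCompact_sphere (0 : E) 1).exists_isMinOn
    (NormedSpace.sphere_nonempty.2 zero_le_one) hQ.continuousOn
  refine ⟨Q u, hpos u (ne_zero_of_mem_unit_sphere ⟨u, hu⟩), fun y ↦ ?_⟩
  rcases eq_or_ne y 0 with rfl | hy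
  · simp [hQ0]
  have hle : Q u ≤ Q (‖y‖⁻¹ • y) := hmin (by simp [norm_smul, hy])
  rw [hhom] at hle
  calc Q u * ‖y‖ ^ 2 ≤ ‖y‖⁻¹ ^ 2 * Q y * ‖y‖ ^ 2 := by gcongr
    _ = Q y := by field_simp

theorem SimpleGraph.Reachable.apply_eq {V α : Type*} {G : SimpleGraph V} {f : V → α}
    (h : ∀ u v, G.Adj u v → f u = f v) {u v : V} (huv : G.Reachable u v) : f u = f v := by
  obtain ⟨p⟩ := huv
  induction p with
  | nil => rfl
  | cons hadj _ ih => exact (h _ _ hadj).trans ih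

section SpectralGap

variable {ι : Type*} [Fintype ι]

theorem sum_sq_le_card_mul_norm_sq (y : ι → ℝ) : ∑ i, y i ^ 2 ≤ Fintype.card ι * ‖y‖ ^ 2 := by
  calc ∑ i, y i ^ 2 ≤ ∑ _i : ι, ‖y‖ ^ 2 :=
        sum_le_sum fun i _ ↦ by
          rw [← sq_abs, ← Real.norm_eq_abs]
          exact pow_le_pow_left₀ (norm_nonneg _) (norm_le_pi_norm y i) 2
    _ = Fintype.card ι * ‖y‖ ^ 2 := by simp

theorem eq_zero_of_sum_eq_zero_of_connected {r : ι → ι → Prop}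
    (hconn : (SimpleGraph.fromRel r).Connected) {y : ι → ℝ} (hedge : ∀ i j, r i j → y i = y j)
    (hy : ∑ i, y i = 0) : y = 0 := by
  have hconst : ∀ i j, y i = y j := fun i j ↦ (hconn i j).apply_eq fun u v huv ↦ by
    rcases (SimpleGraph.fromRel_adj _ _ _).1 huv |>.2 with h | h
    exacts [hedge u v h, (hedge v u h).symm]
  have : Nonempty ι := hconn.nonempty
  have hn : (Fintype.card ι : ℝ) ≠ 0 := Nat.cast_ne_zero.2 Fintype.card_ne_zero
  funext i
  have : (Fintype.card ι : ℝ) * y i = 0 := by simpa [fun j ↦ hconst j i] using hy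
  simpa [hn] using this

theorem eq_of_sum_mul_sq_nonpos {A : ι → ι → ℝ} (hA : ∀ i j, 0 ≤ A i j) {y : ι → ℝ}
    (h : ∑ i, ∑ j, A i j * (y j - y i) ^ 2 ≤ 0) {i j : ι} (hij : 0 < A i j) : y i = y j := by
  have hnn : ∀ i j, 0 ≤ A i j * (y j - y i) ^ 2 := fun i j ↦ mul_nonneg (hA i j) (sq_nonneg _)
  have h0 := le_antisymm h (sum_nonneg fun i _ ↦ sum_nonneg fun j _ ↦ hnn i j)
  rw [sum_eq_zero_iff_of_nonneg fun i _ ↦ sum_nonneg fun j _ ↦ hnn i j] at h0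
  have hterm := (sum_eq_zero_iff_of_nonneg fun j _ ↦ hnn i j).1 (h0 i (mem_univ i)) j (mem_univ j)
  have := (mul_eq_zero.1 hterm).resolve_left hij.ne'
  exact (sub_eq_zero.1 (pow_eq_zero_iff two_ne_zero |>.1 this)).symm

theorem exists_pos_mul_sum_sq_le_of_connected {A : ι → ι → ℝ} (hA : ∀ i j, 0 ≤ A i j)
    (hconn : (SimpleGraph.fromRel fun i j ↦ 0 < A i j).Connected) :
    ∃ μ > 0, ∀ y : ι → ℝ, ∑ i, y i = 0 →
      μ * ∑ i, y i ^ 2 ≤ ∑ i, ∑ j, A i j * (y j - y i) ^ 2 := by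
  set Q : (ι → ℝ) → ℝ := fun y ↦ ∑ i, ∑ j, A i j * (y j - y i) ^ 2
  let S : Submodule ℝ (ι → ℝ) := LinearMap.ker (∑ i, LinearMap.proj i)
  have hS : ∀ y, y ∈ S ↔ ∑ i, y i = 0 := by simp [S]
  have hQpos : ∀ y ∈ S, y ≠ 0 → 0 < Q y := fun y hyS hy ↦ lt_of_not_ge fun hQ ↦
    hy (eq_zero_of_sum_eq_zero_of_connected hconn (fun _ _ ↦ eq_of_sum_mul_sq_nonpos hA hQ)
      ((hS y).1 hyS))
  obtain ⟨ν, hν, hQ⟩ := exists_pos_mul_norm_sq_le (E := S) (Q := fun y ↦ Q y) (by fun_prop)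
    (fun c y ↦ by
      simp only [Q, Submodule.coe_smul, Pi.smul_apply, smul_eq_mul, mul_sum]
      exact sum_congr rfl fun i _ ↦ sum_congr rfl fun j _ ↦ by ring)
    (fun y hy ↦ hQpos y y.2 (by simpa using hy))
  have : Nonempty ι := hconn.nonempty
  have hn : 0 < (Fintype.card ι : ℝ) := Nat.cast_pos.2 Fintype.card_pos
  refine ⟨ν / Fintype.card ι, by positivity, fun y hy ↦ ?_⟩
  have hQy : ν * ‖y‖ ^ 2 ≤ Q y := hQ ⟨y, (hS y).2 hy⟩
  calc ν / Fintype.card ι * ∑ i, y i ^ 2 ≤ ν / Fintype.card ι * (Fintype.card ι * ‖y‖ ^ 2) := by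
        gcongr; exact sum_sq_le_card_mul_norm_sq y
    _ = ν * ‖y‖ ^ 2 := by field_simp
    _ ≤ Q y := hQy

end SpectralGap

theorem mul_sq_le_mul_sin_add_sub_sin {γ r d δ : ℝ} (hγr : γ + r < π / 2) (hd : |d| ≤ γ)
    (hδ : |δ| ≤ 2 * r) : 2 * cos (γ + r) / π * δ ^ 2 ≤ δ * (sin (d + δ) - sin d) := by
  have hγ : 0 ≤ γ := (abs_nonneg d).trans hd
  have hr : 0 ≤ r := by linarith [abs_nonneg δ]
  have hsub : sin (d + δ) - sin d = 2 * sin (δ / 2) * cos (d + δ / 2) := by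
    rw [sin_sub_sin]; ring_nf
  have hcos : cos (γ + r) ≤ cos (d + δ / 2) := by
    rw [← cos_abs (d + δ / 2)]
    refine cos_le_cos_of_nonneg_of_le_pi (abs_nonneg _) (by linarith [pi_pos]) ?_
    calc |d + δ / 2| ≤ |d| + |δ / 2| := abs_add_le _ _
      _ ≤ γ + r := by rw [abs_div, abs_two]; linarith
  have hjordan : δ ^ 2 / π ≤ δ * sin (δ / 2) := by
    have heven : δ * sin (δ / 2) = |δ| * sin (|δ| / 2) := by
      rcases abs_cases δ with ⟨h, _⟩ | ⟨h, _⟩ <;> rw [h]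
      rw [neg_div, sin_neg, neg_mul_neg]
    have := mul_le_sin (x := |δ| / 2) (by positivity) (by linarith)
    rw [heven, ← sq_abs δ]
    calc |δ| ^ 2 / π = |δ| * (2 / π * (|δ| / 2)) := by field_simp
      _ ≤ |δ| * sin (|δ| / 2) := mul_le_mul_of_nonneg_left this (abs_nonneg δ)
  have hcos0 : 0 ≤ cos (γ + r) := cos_nonneg_of_mem_Icc ⟨by linarith [pi_pos], by linarith⟩
  rw [hsub]
  calc 2 * cos (γ + r) / π * δ ^ 2 = 2 * (cos (γ + r) * (δ ^ 2 / π)) := by ring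
    _ ≤ 2 * (cos (d + δ / 2) * (δ * sin (δ / 2))) := by
      gcongr 2 * ?_
      exact mul_le_mul hcos hjordan (by positivity) (hcos0.trans hcos)
    _ = δ * (2 * sin (δ / 2) * cos (d + δ / 2)) := by ring

section Kuramoto

variable {ι : Type*} (A : ι → ι → ℝ) (θs : ι → ℝ)

noncomputable def kuramotoFlux (φ : ι → ℝ) (i j : ι) : ℝ :=
  A i j * (sin (φ j - φ i) - sin (θs j - θs i))

variable {A θs}

theorem kuramotoFlux_swap (hA : ∀ i j, A j i = A i j) (φ : ι → ℝ) (i j : ι) :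
    kuramotoFlux A θs φ j i = -kuramotoFlux A θs φ i j := by
  simp only [kuramotoFlux, hA i j, ← neg_sub (φ j), ← neg_sub (θs j), sin_neg]
  ring

theorem sum_kuramotoFlux [Fintype ι] (heq : ∀ i, ∑ j, A i j * sin (θs j - θs i) = 0)
    (φ : ι → ℝ) (i : ι) : ∑ j, kuramotoFlux A θs φ i j = ∑ j, A i j * sin (φ j - φ i) := by
  simp [kuramotoFlux, mul_sub, heq i]

theorem mul_sq_le_mul_kuramotoFlux [Fintype ι] (hA : ∀ i j, 0 ≤ A i j) {γ r : ℝ}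
    (hγr : γ + r < π / 2) (hcoh : ∀ i j, 0 < A i j → |θs i - θs j| < γ) {φ : ι → ℝ}
    (hφ : ‖φ - θs‖ ≤ r) (i j : ι) :
    2 * cos (γ + r) / π * A i j * ((φ - θs) j - (φ - θs) i) ^ 2 ≤
      ((φ - θs) j - (φ - θs) i) * kuramotoFlux A θs φ i j := by
  rcases (hA i j).eq_or_lt with h | h
  · simp [kuramotoFlux, ← h]
  have hd : |θs j - θs i| ≤ γ := by rw [abs_sub_comm]; exact (hcoh i j h).le
  have hδ : |(φ - θs) j - (φ - θs) i| ≤ 2 * r := by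
    have hj := norm_le_pi_norm (φ - θs) j
    have hi := norm_le_pi_norm (φ - θs) i
    rw [Real.norm_eq_abs] at hi hj
    linarith [abs_sub ((φ - θs) j) ((φ - θs) i)]
  have key := mul_le_mul_of_nonneg_left (mul_sq_le_mul_sin_add_sub_sin hγr hd hδ) (hA i j)
  rw [show θs j - θs i + ((φ - θs) j - (φ - θs) i) = φ j - φ i by simp; ring] at key
  simp only [kuramotoFlux]
  linarith

end Kuramoto

/-- Phase-cohesive basins of attraction on general Kuramoto networks: with
symmetric nonnegative weights whose positive-weight graph is connected, identical natural
frequencies (rotating frame), an equilibrium `θ*` with `|θ*_i - θ*_j| < γ` on all edges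
for some `γ ∈ [0, π/2)`, every differentiable solution starting in the open infinity-ball
of radius `π/2 - γ` around `θ*` converges to `θ* + c·(1, ..., 1)` for some `c ∈ ℝ`. -/
theorem phase_cohesive_basin_of_attraction (n : ℕ)
    (A : Matrix (Fin n) (Fin n) ℝ) (hsymm : A.IsSymm) (hnonneg : ∀ i j, 0 ≤ A i j)
    (hconn : (SimpleGraph.fromRel (fun i j : Fin n => 0 < A i j)).Connected)
    (θs : Fin n → ℝ)
    (heq : ∀ i, ∑ j, A i j * Real.sin (θs j - θs i) = 0)
    (γ : ℝ) (hγ0 : 0 ≤ γ) (hγ2 : γ < Real.pi / 2)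
    (hcoh : ∀ i j, 0 < A i j → |θs i - θs j| < γ)
    (θ : ℝ → Fin n → ℝ)
    (hsol : ∀ t ∈ Set.Ici (0 : ℝ), ∀ i,
      HasDerivAt (fun s => θ s i) (∑ j, A i j * Real.sin (θ t j - θ t i)) t)
    (hinit : ∀ k, |θ 0 k - θs k| < Real.pi / 2 - γ) :
    ∃ c : ℝ, Filter.Tendsto θ Filter.atTop (nhds (fun i => θs i + c)) := by
  set x : ℝ → Fin n → ℝ := fun t ↦ θ t - θs
  set F : ℝ → Fin n → Fin n → ℝ := fun t ↦ kuramotoFlux A θs (θ t)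
  have hanti : ∀ t i j, F t j i = -F t i j := fun t ↦ kuramotoFlux_swap hsymm.apply (θ t)
  have hx : ∀ t ≥ 0, ∀ i, HasDerivAt (fun s ↦ x s i) (∑ j, F t i j) t := fun t ht i ↦ by
    simpa [x, F, sum_kuramotoFlux heq] using (hsol t ht i).sub_const (θs i)
  have hx0 : ‖x 0‖ < π / 2 - γ :=
    (pi_norm_lt_iff (by linarith)).2 fun k ↦ by simpa [x] using hinit k
  obtain ⟨r, hx0r, hrγ⟩ := _root_.exists_between hx0
  have hκ : 0 < 2 * cos (γ + r) / π := by
    have : 0 < r := (norm_nonneg _).trans_lt hx0r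
    have := cos_pos_of_mem_Ioo (x := γ + r) ⟨by linarith, by linarith⟩
    positivity
  have hbound := fun φ (hφ : ‖φ - θs‖ ≤ r) ↦
    mul_sq_le_mul_kuramotoFlux hnonneg (by linarith : γ + r < π / 2) hcoh hφ
  have htrap : ∀ t ≥ 0, ‖x t‖ < r := fun t ↦ norm_lt_of_antisymm_flux hanti hx
    (fun s _ hs i j ↦ (mul_nonneg (mul_nonneg hκ.le (hnonneg i j)) (sq_nonneg _)).trans
      (hbound _ hs.le i j)) hx0r
  obtain ⟨μ, hμ, hgap⟩ := exists_pos_mul_sum_sq_le_of_connected hnonneg hconn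
  obtain ⟨c, hc⟩ := exists_tendsto_const_of_antisymm_flux (mul_pos hκ hμ)
    (fun y hy ↦ by simpa [mul_assoc, mul_sum] using mul_le_mul_of_nonneg_left (hgap y hy) hκ.le)
    hanti hx fun t ht ↦ hbound _ (htrap t ht).le
  exact ⟨c, by simpa [x, Pi.add_def] using (tendsto_const_nhds (x := θs)).add hc⟩
end
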